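/- arXiv:1401.1443 — 2 statements merged into one kernel-verified Lean document; each statement's English description precedes it below -/
import Mathlib

section
/- For all p, q ∈ (0,1) with p ≠ q and all self-similar measures μ_p and μ_q, the first Wasserstein distance satisfies the lower bound W₁(μ_p, μ_q) ≥ ((t₂−t₁)/(1−c)) · |p−q|. -/
/-!
Testing a coupling against the 1-Lipschitz function `x ↦ x` bounds `W₁(μ, ν)` below by the
difference of the means. The mean `m` of `μ_p` is forced by self-similarity: integrating `x`
against both sides gives `m = p (c m + t₁) + (1 - p) (c m + t₂)`, so
`m = (t₂ - p (t₂ - t₁)) / (1 - c)`, which is affine in `p` with slope `-(t₂ - t₁) / (1 - c)`.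
-/

open MeasureTheory

/-- The first Wasserstein distance: the infimum over couplings of μ and ν of the
first moment ∫ |x − y| dγ. -/
noncomputable def wasserstein1 (μ ν : Measure ℝ) : ℝ :=
  sInf { a : ℝ | ∃ γ : Measure (ℝ × ℝ), IsProbabilityMeasure γ ∧
    γ.map Prod.fst = μ ∧ γ.map Prod.snd = ν ∧ a = ∫ z : ℝ × ℝ, |z.1 - z.2| ∂γ }

lemma abs_integral_sub_integral_le_of_coupling {μ ν : Measure ℝ} {γ : Measure (ℝ × ℝ)}
    (hμ : Integrable (fun x : ℝ => x) μ) (hν : Integrable (fun x : ℝ => x) ν)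
    (hγ₁ : γ.map Prod.fst = μ) (hγ₂ : γ.map Prod.snd = ν) :
    |∫ x, x ∂μ - ∫ x, x ∂ν| ≤ ∫ z, |z.1 - z.2| ∂γ := by
  subst hγ₁ hγ₂
  have hint₁ : Integrable Prod.fst γ :=
    (integrable_map_measure aestronglyMeasurable_id measurable_fst.aemeasurable).mp hμ
  have hint₂ : Integrable Prod.snd γ :=
    (integrable_map_measure aestronglyMeasurable_id measurable_snd.aemeasurable).mp hν
  rw [integral_map (f := fun x : ℝ => x) measurable_fst.aemeasurable aestronglyMeasurable_id,
    integral_map (f := fun x : ℝ => x) measurable_snd.aemeasurable aestronglyMeasurable_id,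
    ← integral_sub hint₁ hint₂]
  exact abs_integral_le_integral_abs

lemma abs_integral_sub_integral_le_wasserstein1 {μ ν : Measure ℝ}
    [IsProbabilityMeasure μ] [IsProbabilityMeasure ν]
    (hμ : Integrable (fun x : ℝ => x) μ) (hν : Integrable (fun x : ℝ => x) ν) :
    |∫ x, x ∂μ - ∫ x, x ∂ν| ≤ wasserstein1 μ ν := by
  refine le_csInf ⟨_, μ.prod ν, inferInstance, Measure.fst_prod, Measure.snd_prod, rfl⟩ ?_
  rintro a ⟨γ, -, hγ₁, hγ₂, rfl⟩
  exact abs_integral_sub_integral_le_of_coupling hμ hν hγ₁ hγ₂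

lemma integrable_id_of_measure_compl_Icc_eq_zero {μ : Measure ℝ} [IsFiniteMeasure μ] {a b : ℝ}
    (h : μ (Set.Icc a b)ᶜ = 0) : Integrable (fun x : ℝ => x) μ := by
  refine .of_bound aestronglyMeasurable_id (max |a| |b|) ?_
  filter_upwards [ae_iff.mpr h] with x hx
  exact abs_le_max_abs_abs hx.1 hx.2

section Affine

variable {μ : Measure ℝ} (c t : ℝ)

lemma integrable_id_map_affine [IsFiniteMeasure μ] (hμ : Integrable (fun x : ℝ => x) μ) :
    Integrable (fun x : ℝ => x) (μ.map fun x => c * x + t) :=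
  (integrable_map_measure aestronglyMeasurable_id (by fun_prop)).mpr
    ((hμ.const_mul c).add (integrable_const t))

lemma integral_id_map_affine [IsProbabilityMeasure μ] (hμ : Integrable (fun x : ℝ => x) μ) :
    ∫ x, x ∂(μ.map fun x => c * x + t) = c * ∫ x, x ∂μ + t := by
  rw [integral_map (f := fun x : ℝ => x) (by fun_prop) aestronglyMeasurable_id,
    integral_add (hμ.const_mul c) (integrable_const t), integral_const_mul, integral_const]
  simp

end Affine

lemma integral_id_of_eq_smul_map_add_smul_map {μ : Measure ℝ} [IsProbabilityMeasure μ]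
    {c t₁ t₂ p : ℝ} (hc : c ≠ 1) (hp₀ : 0 ≤ p) (hp₁ : p ≤ 1)
    (hμ : Integrable (fun x : ℝ => x) μ)
    (hss : μ = ENNReal.ofReal p • μ.map (fun x : ℝ => c * x + t₁)
             + ENNReal.ofReal (1 - p) • μ.map (fun x : ℝ => c * x + t₂)) :
    ∫ x, x ∂μ = (t₂ - p * (t₂ - t₁)) / (1 - c) := by
  have hfixed : ∫ x, x ∂μ = p * (c * ∫ x, x ∂μ + t₁) + (1 - p) * (c * ∫ x, x ∂μ + t₂) := by
    conv_lhs => rw [hss]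
    rw [integral_add_measure
        ((integrable_id_map_affine c t₁ hμ).smul_measure ENNReal.ofReal_ne_top)
        ((integrable_id_map_affine c t₂ hμ).smul_measure ENNReal.ofReal_ne_top),
      integral_smul_measure, integral_smul_measure, ENNReal.toReal_ofReal hp₀,
      ENNReal.toReal_ofReal (sub_nonneg.mpr hp₁), integral_id_map_affine c t₁ hμ,
      integral_id_map_affine c t₂ hμ, smul_eq_mul, smul_eq_mul]
  rw [eq_div_iff (sub_ne_zero.mpr hc.symm)]
  linarith

theorem wasserstein1_lower_bound_general
    (c t₁ t₂ : ℝ) (hc : c ∈ Set.Ioc (0:ℝ) (1/2))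
    (ht₂ : t₂ ∈ Set.Icc (t₁ + c) (1 - c))
    (p q : ℝ) (hp : p ∈ Set.Ioo (0:ℝ) 1) (hq : q ∈ Set.Ioo (0:ℝ) 1)
    (μp : Measure ℝ) (hμp : IsProbabilityMeasure μp)
    (hsuppp : μp ((Set.Icc (0:ℝ) 1)ᶜ) = 0)
    (hssp : μp = ENNReal.ofReal p • μp.map (fun x : ℝ => c * x + t₁)
               + ENNReal.ofReal (1 - p) • μp.map (fun x : ℝ => c * x + t₂))
    (μq : Measure ℝ) (hμq : IsProbabilityMeasure μq)
    (hsuppq : μq ((Set.Icc (0:ℝ) 1)ᶜ) = 0)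
    (hssq : μq = ENNReal.ofReal q • μq.map (fun x : ℝ => c * x + t₁)
               + ENNReal.ofReal (1 - q) • μq.map (fun x : ℝ => c * x + t₂)) :
    (t₂ - t₁) / (1 - c) * |p - q| ≤ wasserstein1 μp μq := by
  have hc₁ : c < 1 := by linarith [hc.2]
  have hintp := integrable_id_of_measure_compl_Icc_eq_zero hsuppp
  have hintq := integrable_id_of_measure_compl_Icc_eq_zero hsuppq
  have hmeans : |∫ x, x ∂μp - ∫ x, x ∂μq| = (t₂ - t₁) / (1 - c) * |p - q| := by
    rw [integral_id_of_eq_smul_map_add_smul_map hc₁.ne hp.1.le hp.2.le hintp hssp,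
      integral_id_of_eq_smul_map_add_smul_map hc₁.ne hq.1.le hq.2.le hintq hssq,
      show (t₂ - p * (t₂ - t₁)) / (1 - c) - (t₂ - q * (t₂ - t₁)) / (1 - c)
        = (t₂ - t₁) / (1 - c) * (q - p) by ring,
      abs_mul, abs_of_nonneg (div_nonneg (by linarith [ht₂.1, hc.1]) (sub_pos.mpr hc₁).le),
      abs_sub_comm]
  rw [← hmeans]
  exact abs_integral_sub_integral_le_wasserstein1 hintp hintq

/-- The lower bound for the first Wasserstein distance between two self-similar
measures. -/
theorem wasserstein1_lower_bound
    (c t₁ t₂ : ℝ) (hc : c ∈ Set.Ioc (0:ℝ) (1/2))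
    (ht₁ : t₁ ∈ Set.Icc (0:ℝ) (1 - 2*c)) (ht₂ : t₂ ∈ Set.Icc (t₁ + c) (1 - c))
    (p q : ℝ) (hp : p ∈ Set.Ioo (0:ℝ) 1) (hq : q ∈ Set.Ioo (0:ℝ) 1) (hpq : p ≠ q)
    (μp : Measure ℝ) (hμp : IsProbabilityMeasure μp)
    (hsuppp : μp ((Set.Icc (0:ℝ) 1)ᶜ) = 0)
    (hssp : μp = ENNReal.ofReal p • μp.map (fun x : ℝ => c * x + t₁)
               + ENNReal.ofReal (1 - p) • μp.map (fun x : ℝ => c * x + t₂))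
    (μq : Measure ℝ) (hμq : IsProbabilityMeasure μq)
    (hsuppq : μq ((Set.Icc (0:ℝ) 1)ᶜ) = 0)
    (hssq : μq = ENNReal.ofReal q • μq.map (fun x : ℝ => c * x + t₁)
               + ENNReal.ofReal (1 - q) • μq.map (fun x : ℝ => c * x + t₂)) :
    (t₂ - t₁) / (1 - c) * |p - q| ≤ wasserstein1 μp μq :=
  wasserstein1_lower_bound_general c t₁ t₂ hc ht₂ p q hp hq μp hμp hsuppp hssp μq hμq hsuppq hssq
end

section
/- If t₁ = 0 and t₂ = 1−c (the middle-(1−2c) Cantor set construction), then for all p, q ∈ (0,1) with p ≠ q and all self-similar measures μ_p and μ_q, the first Wasserstein distance satisfies W₁(μ_p, μ_q) = |p−q|; in particular it does not depend on the contraction parameter c. -/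
/-!
Integrating the self-similarity shows that `μ_p` has mean `1 - p`, so every coupling of `μ_p`
and `μ_q` costs at least `|p - q|`. For `q ≤ p`, the cost of a coupling `γ` is `p - q` plus
twice its downward cost `∫ (x - y)⁺ dγ`. By self-similarity, the step
`γ ↦ q • (S₁ × S₁)γ + (1 - p) • (S₂ × S₂)γ + (p - q) • (S₁ × S₂)γ` sends couplings to couplings.
Since `c ≤ 1/2`, `S₁ [0, 1] = [0, c]` lies below `S₂ [0, 1] = [1 - c, 1]`, so the last term moves
mass only upwards and the step multiplies the downward cost by `c (1 - (p - q)) < 1`. Iterating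
from the product coupling gives couplings whose cost tends to `p - q`.
-/

open MeasureTheory

open Filter Topology
open scoped ENNReal

section ProdMap

variable {α β α' β' : Type*} [MeasurableSpace α] [MeasurableSpace β] [MeasurableSpace α']
  [MeasurableSpace β'] {ρ : Measure (α × β)} {f : α → α'} {g : β → β'}

lemma map_fst_map_prodMap (hf : Measurable f) (hg : Measurable g) :
    (ρ.map (Prod.map f g)).map Prod.fst = (ρ.map Prod.fst).map f := by
  rw [Measure.map_map measurable_fst (hf.prodMap hg), Measure.map_map hf measurable_fst]
  rfl

lemma map_snd_map_prodMap (hf : Measurable f) (hg : Measurable g) :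
    (ρ.map (Prod.map f g)).map Prod.snd = (ρ.map Prod.snd).map g := by
  rw [Measure.map_map measurable_snd (hf.prodMap hg), Measure.map_map hg measurable_snd]
  rfl

end ProdMap

section Coupling

variable {μ ν : Measure ℝ} {γ : Measure (ℝ × ℝ)}

lemma wasserstein1_le_integral (hγ : IsProbabilityMeasure γ) (h₁ : γ.map Prod.fst = μ)
    (h₂ : γ.map Prod.snd = ν) : wasserstein1 μ ν ≤ ∫ z, |z.1 - z.2| ∂γ :=
  csInf_le ⟨0, by rintro _ ⟨γ', -, -, -, rfl⟩; exact integral_nonneg fun _ => abs_nonneg _⟩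
    ⟨γ, hγ, h₁, h₂, rfl⟩

lemma le_wasserstein1 [IsProbabilityMeasure μ] [IsProbabilityMeasure ν] {a : ℝ}
    (h : ∀ γ : Measure (ℝ × ℝ), IsProbabilityMeasure γ → γ.map Prod.fst = μ →
      γ.map Prod.snd = ν → a ≤ ∫ z, |z.1 - z.2| ∂γ) :
    a ≤ wasserstein1 μ ν := by
  refine le_csInf ⟨_, μ.prod ν, inferInstance, by simp, by simp, rfl⟩ ?_
  rintro _ ⟨γ, hγ, h₁, h₂, rfl⟩
  exact h γ hγ h₁ h₂

lemma exists_coupling_swap {a : ℝ}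
    (h : ∃ γ : Measure (ℝ × ℝ), IsProbabilityMeasure γ ∧
      γ.map Prod.fst = μ ∧ γ.map Prod.snd = ν ∧ a = ∫ z, |z.1 - z.2| ∂γ) :
    ∃ γ : Measure (ℝ × ℝ), IsProbabilityMeasure γ ∧
      γ.map Prod.fst = ν ∧ γ.map Prod.snd = μ ∧ a = ∫ z, |z.1 - z.2| ∂γ := by
  obtain ⟨γ, hγ, h₁, h₂, rfl⟩ := h
  refine ⟨γ.map Prod.swap, Measure.isProbabilityMeasure_map measurable_swap.aemeasurable,
    ?_, ?_, ?_⟩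
  · exact (Measure.fst_map_swap (ρ := γ)).trans h₂
  · exact (Measure.snd_map_swap (ρ := γ)).trans h₁
  · rw [integral_map measurable_swap.aemeasurable (by fun_prop)]
    exact integral_congr_ae (ae_of_all _ fun z => abs_sub_comm _ _)

lemma wasserstein1_comm (μ ν : Measure ℝ) : wasserstein1 μ ν = wasserstein1 ν μ := by
  unfold wasserstein1
  congr 1
  ext a
  exact ⟨exists_coupling_swap, exists_coupling_swap⟩

lemma integrable_id_of_ae_mem_Icc [IsFiniteMeasure μ] {a b : ℝ}
    (h : ∀ᵐ x ∂μ, x ∈ Set.Icc a b) : Integrable (fun x => x) μ := by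
  rw [← Measure.restrict_eq_self_of_ae_mem h]
  exact continuous_id.integrableOn_Icc

lemma integrable_fst_of_map (h₁ : γ.map Prod.fst = μ) (hμ : Integrable (fun x => x) μ) :
    Integrable (fun z => z.1) γ :=
  (h₁ ▸ hμ).comp_measurable measurable_fst

lemma integrable_snd_of_map (h₂ : γ.map Prod.snd = ν) (hν : Integrable (fun x => x) ν) :
    Integrable (fun z => z.2) γ :=
  (h₂ ▸ hν).comp_measurable measurable_snd

lemma integral_fst_of_map (h₁ : γ.map Prod.fst = μ) : ∫ z, z.1 ∂γ = ∫ x, x ∂μ := by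
  rw [← h₁, integral_map measurable_fst.aemeasurable (by fun_prop)]

lemma integral_snd_of_map (h₂ : γ.map Prod.snd = ν) : ∫ z, z.2 ∂γ = ∫ x, x ∂ν := by
  rw [← h₂, integral_map measurable_snd.aemeasurable (by fun_prop)]

lemma abs_sub_integral_le_wasserstein1 [IsProbabilityMeasure μ] [IsProbabilityMeasure ν]
    (hμ : Integrable (fun x => x) μ) (hν : Integrable (fun x => x) ν) :
    |∫ x, x ∂μ - ∫ x, x ∂ν| ≤ wasserstein1 μ ν := by
  refine le_wasserstein1 fun γ _ h₁ h₂ => ?_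
  rw [← integral_fst_of_map h₁, ← integral_snd_of_map h₂,
    ← integral_sub (integrable_fst_of_map h₁ hμ) (integrable_snd_of_map h₂ hν)]
  exact abs_integral_le_integral_abs

end Coupling

noncomputable def downwardCost (γ : Measure (ℝ × ℝ)) : ℝ≥0∞ := ∫⁻ z, ENNReal.ofReal (z.1 - z.2) ∂γ

lemma abs_sub_eq_sub_add_two_mul_max (a b : ℝ) : |a - b| = (b - a) + 2 * max (a - b) 0 := by
  rcases le_total a b with h | h
  · rw [abs_of_nonpos (by linarith), max_eq_right (by linarith)]; ring
  · rw [abs_of_nonneg (by linarith), max_eq_left (by linarith)]; ring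

section DownwardCost

variable {γ : Measure (ℝ × ℝ)}

lemma downwardCost_add (γ γ' : Measure (ℝ × ℝ)) :
    downwardCost (γ + γ') = downwardCost γ + downwardCost γ' :=
  lintegral_add_measure _ _ _

lemma downwardCost_smul (r : ℝ≥0∞) (γ : Measure (ℝ × ℝ)) :
    downwardCost (r • γ) = r * downwardCost γ :=
  lintegral_smul_measure _ _

lemma downwardCost_map_prodMap {f : ℝ → ℝ} {c : ℝ} (hf : Measurable f) (hc : 0 ≤ c)
    (hsub : ∀ x y, f x - f y = c * (x - y)) :
    downwardCost (γ.map (Prod.map f f)) = ENNReal.ofReal c * downwardCost γ := by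
  rw [downwardCost, lintegral_map (by fun_prop) (hf.prodMap hf)]
  simp_rw [Prod.map_fst, Prod.map_snd, hsub, ENNReal.ofReal_mul hc]
  exact lintegral_const_mul _ (by fun_prop)

lemma downwardCost_eq_zero_of_ae_le (h : ∀ᵐ z ∂γ, z.1 ≤ z.2) : downwardCost γ = 0 :=
  (lintegral_congr_ae (h.mono fun _ hz => ENNReal.ofReal_eq_zero.mpr (sub_nonpos.mpr hz))).trans
    lintegral_zero

lemma integral_abs_sub_eq_add_downwardCost (h₁ : Integrable (fun z => z.1) γ)
    (h₂ : Integrable (fun z => z.2) γ) :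
    ∫ z, |z.1 - z.2| ∂γ = (∫ z, z.2 ∂γ - ∫ z, z.1 ∂γ) + 2 * (downwardCost γ).toReal := by
  have hsub : Integrable (fun z => z.2 - z.1) γ := h₂.sub h₁
  have hpos : Integrable (fun z => max (z.1 - z.2) 0) γ := (h₁.sub h₂).pos_part
  have hcost : ∫ z, max (z.1 - z.2) 0 ∂γ = (downwardCost γ).toReal := by
    rw [integral_eq_lintegral_of_nonneg_ae (f := fun z : ℝ × ℝ => max (z.1 - z.2) 0)
      (ae_of_all _ fun _ => le_max_right _ _) hpos.aestronglyMeasurable]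
    simp [downwardCost]
  simp_rw [abs_sub_eq_sub_add_two_mul_max]
  rw [integral_add hsub (hpos.const_mul 2), integral_sub h₂ h₁, integral_const_mul, hcost]

end DownwardCost

namespace MiddleCantor

def leftMap (c x : ℝ) : ℝ := c * x

def rightMap (c x : ℝ) : ℝ := c * x + (1 - c)

lemma measurable_leftMap (c : ℝ) : Measurable (leftMap c) := measurable_const_mul c

lemma measurable_rightMap (c : ℝ) : Measurable (rightMap c) := (measurable_const_mul c).add_const _

def IsSelfSimilar (c p : ℝ) (μ : Measure ℝ) : Prop :=
  μ = ENNReal.ofReal p • μ.map (leftMap c) + ENNReal.ofReal (1 - p) • μ.map (rightMap c)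

variable {c p q : ℝ} {μ ν : Measure ℝ} {γ : Measure (ℝ × ℝ)}

lemma integral_id_eq_one_sub [IsProbabilityMeasure μ] (hc : c ≠ 1) (hp₀ : 0 ≤ p) (hp₁ : p ≤ 1)
    (hint : Integrable (fun x => x) μ) (hμ : IsSelfSimilar c p μ) :
    ∫ x, x ∂μ = 1 - p := by
  have hL : ∫ x, x ∂μ.map (leftMap c) = c * ∫ x, x ∂μ := by
    rw [integral_map (measurable_leftMap c).aemeasurable (by fun_prop)]
    exact integral_const_mul c _
  have hR : ∫ x, x ∂μ.map (rightMap c) = c * ∫ x, x ∂μ + (1 - c) := by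
    rw [integral_map (measurable_rightMap c).aemeasurable (by fun_prop)]
    simp_rw [rightMap]
    rw [integral_add (hint.const_mul c) (integrable_const _), integral_const_mul]
    simp
  have hiL : Integrable (fun x => x) (μ.map (leftMap c)) :=
    (integrable_map_measure (by fun_prop) (measurable_leftMap c).aemeasurable).mpr
      (hint.const_mul c)
  have hiR : Integrable (fun x => x) (μ.map (rightMap c)) :=
    (integrable_map_measure (by fun_prop) (measurable_rightMap c).aemeasurable).mpr
      ((hint.const_mul c).add (integrable_const _))
  have key : ∫ x, x ∂μ = p * (c * ∫ x, x ∂μ) + (1 - p) * (c * ∫ x, x ∂μ + (1 - c)) := by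
    conv_lhs => rw [hμ]
    rw [integral_add_measure (hiL.smul_measure ENNReal.ofReal_ne_top)
      (hiR.smul_measure ENNReal.ofReal_ne_top), integral_smul_measure, integral_smul_measure,
      ENNReal.toReal_ofReal hp₀, ENNReal.toReal_ofReal (sub_nonneg.mpr hp₁), hL, hR,
      smul_eq_mul, smul_eq_mul]
  have hfactor : (∫ x, x ∂μ - (1 - p)) * (1 - c) = 0 := by linear_combination key
  rcases mul_eq_zero.mp hfactor with h | h
  · linarith
  · exact absurd (by linarith) hc

noncomputable def couplingStep (c p q : ℝ) (γ : Measure (ℝ × ℝ)) : Measure (ℝ × ℝ) :=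
  ENNReal.ofReal q • γ.map (Prod.map (leftMap c) (leftMap c))
    + ENNReal.ofReal (1 - p) • γ.map (Prod.map (rightMap c) (rightMap c))
    + ENNReal.ofReal (p - q) • γ.map (Prod.map (leftMap c) (rightMap c))

lemma map_fst_couplingStep (hq : 0 ≤ q) (hqp : q ≤ p) (hμ : IsSelfSimilar c p μ)
    (h₁ : γ.map Prod.fst = μ) : (couplingStep c p q γ).map Prod.fst = μ := by
  have hL := measurable_leftMap c
  have hR := measurable_rightMap c
  rw [couplingStep, Measure.map_add _ _ measurable_fst, Measure.map_add _ _ measurable_fst,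
    Measure.map_smul, Measure.map_smul, Measure.map_smul, map_fst_map_prodMap hL hL,
    map_fst_map_prodMap hR hR, map_fst_map_prodMap hL hR, h₁, add_right_comm, ← add_smul,
    ← ENNReal.ofReal_add hq (sub_nonneg.mpr hqp), add_sub_cancel]
  exact hμ.symm

lemma map_snd_couplingStep (hqp : q ≤ p) (hp : p ≤ 1) (hν : IsSelfSimilar c q ν)
    (h₂ : γ.map Prod.snd = ν) : (couplingStep c p q γ).map Prod.snd = ν := by
  have hL := measurable_leftMap c
  have hR := measurable_rightMap c
  rw [couplingStep, Measure.map_add _ _ measurable_snd, Measure.map_add _ _ measurable_snd,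
    Measure.map_smul, Measure.map_smul, Measure.map_smul, map_snd_map_prodMap hL hL,
    map_snd_map_prodMap hR hR, map_snd_map_prodMap hL hR, h₂, add_assoc, ← add_smul,
    ← ENNReal.ofReal_add (sub_nonneg.mpr hp) (sub_nonneg.mpr hqp), sub_add_sub_cancel]
  exact hν.symm

lemma downwardCost_couplingStep (hc₀ : 0 ≤ c) (hc : c ≤ 1 / 2) (hq : 0 ≤ q) (hp : p ≤ 1)
    (h₁ : ∀ᵐ z ∂γ, z.1 ≤ 1) (h₂ : ∀ᵐ z ∂γ, 0 ≤ z.2) :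
    downwardCost (couplingStep c p q γ) = ENNReal.ofReal (c * (1 - (p - q))) * downwardCost γ := by
  have hL := measurable_leftMap c
  have hR := measurable_rightMap c
  have hLL := downwardCost_map_prodMap (γ := γ) hL hc₀ fun x y => by simp only [leftMap]; ring
  have hRR := downwardCost_map_prodMap (γ := γ) hR hc₀ fun x y => by simp only [rightMap]; ring
  have hLR : downwardCost (γ.map (Prod.map (leftMap c) (rightMap c))) = 0 := by
    refine downwardCost_eq_zero_of_ae_le ((ae_map_iff (hL.prodMap hR).aemeasurable
      (measurableSet_le measurable_fst measurable_snd)).mpr ?_)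
    filter_upwards [h₁, h₂] with z hz₁ hz₂
    simp only [Prod.map_fst, Prod.map_snd, leftMap, rightMap]
    nlinarith [mul_le_mul_of_nonneg_left hz₁ hc₀, mul_nonneg hc₀ hz₂]
  rw [couplingStep, downwardCost_add, downwardCost_add, downwardCost_smul, downwardCost_smul,
    downwardCost_smul, hLL, hRR, hLR, show c * (1 - (p - q)) = (q + (1 - p)) * c by ring,
    ENNReal.ofReal_mul (by linarith), ENNReal.ofReal_add hq (by linarith)]
  ring

lemma map_iterate_couplingStep (hq : 0 ≤ q) (hqp : q ≤ p) (hp : p ≤ 1)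
    (hμ : IsSelfSimilar c p μ) (hν : IsSelfSimilar c q ν)
    (h₁ : γ.map Prod.fst = μ) (h₂ : γ.map Prod.snd = ν) (n : ℕ) :
    ((couplingStep c p q)^[n] γ).map Prod.fst = μ ∧
      ((couplingStep c p q)^[n] γ).map Prod.snd = ν := by
  induction n with
  | zero => exact ⟨h₁, h₂⟩
  | succ n ih =>
    rw [Function.iterate_succ_apply']
    exact ⟨map_fst_couplingStep hq hqp hμ ih.1, map_snd_couplingStep hqp hp hν ih.2⟩

lemma downwardCost_iterate_couplingStep (hc₀ : 0 ≤ c) (hc : c ≤ 1 / 2) (hq : 0 ≤ q)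
    (hqp : q ≤ p) (hp : p ≤ 1) (hμ : IsSelfSimilar c p μ) (hν : IsSelfSimilar c q ν)
    (hμs : ∀ᵐ x ∂μ, x ∈ Set.Icc (0 : ℝ) 1) (hνs : ∀ᵐ x ∂ν, x ∈ Set.Icc (0 : ℝ) 1)
    (h₁ : γ.map Prod.fst = μ) (h₂ : γ.map Prod.snd = ν) (n : ℕ) :
    downwardCost ((couplingStep c p q)^[n] γ) =
      ENNReal.ofReal (c * (1 - (p - q))) ^ n * downwardCost γ := by
  induction n with
  | zero => simp
  | succ n ih =>
    obtain ⟨h₁', h₂'⟩ := map_iterate_couplingStep hq hqp hp hμ hν h₁ h₂ n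
    have hfst : ∀ᵐ z ∂(couplingStep c p q)^[n] γ, z.1 ≤ 1 :=
      ae_of_ae_map measurable_fst.aemeasurable (h₁' ▸ hμs.mono fun _ hx => hx.2)
    have hsnd : ∀ᵐ z ∂(couplingStep c p q)^[n] γ, 0 ≤ z.2 :=
      ae_of_ae_map measurable_snd.aemeasurable (h₂' ▸ hνs.mono fun _ hx => hx.1)
    rw [Function.iterate_succ_apply', downwardCost_couplingStep hc₀ hc hq hp hfst hsnd, ih,
      pow_succ', mul_assoc]

lemma wasserstein1_le_sub [IsProbabilityMeasure μ] [IsProbabilityMeasure ν] (hc₀ : 0 ≤ c)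
    (hc : c ≤ 1 / 2) (hq : 0 ≤ q) (hqp : q ≤ p) (hp : p ≤ 1)
    (hμs : ∀ᵐ x ∂μ, x ∈ Set.Icc (0 : ℝ) 1) (hνs : ∀ᵐ x ∂ν, x ∈ Set.Icc (0 : ℝ) 1)
    (hμ : IsSelfSimilar c p μ) (hν : IsSelfSimilar c q ν) :
    wasserstein1 μ ν ≤ p - q := by
  set γ : ℕ → Measure (ℝ × ℝ) := fun n => (couplingStep c p q)^[n] (μ.prod ν)
  set r := c * (1 - (p - q))
  set D := (downwardCost (μ.prod ν)).toReal
  have hr₀ : 0 ≤ r := mul_nonneg hc₀ (by linarith)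
  have hr₁ : r < 1 := by nlinarith
  have hmarg (n : ℕ) := map_iterate_couplingStep hq hqp hp hμ hν (γ := μ.prod ν)
    (by simp) (by simp) n
  have hμi := integrable_id_of_ae_mem_Icc hμs
  have hνi := integrable_id_of_ae_mem_Icc hνs
  have hcost (n : ℕ) : ∫ z, |z.1 - z.2| ∂γ n = (p - q) + 2 * (r ^ n * D) := by
    obtain ⟨h₁, h₂⟩ := hmarg n
    rw [integral_abs_sub_eq_add_downwardCost (integrable_fst_of_map h₁ hμi)
        (integrable_snd_of_map h₂ hνi), integral_fst_of_map h₁, integral_snd_of_map h₂,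
      integral_id_eq_one_sub (by linarith) (hq.trans hqp) hp hμi hμ,
      integral_id_eq_one_sub (by linarith) hq (hqp.trans hp) hνi hν,
      downwardCost_iterate_couplingStep hc₀ hc hq hqp hp hμ hν hμs hνs (by simp) (by simp),
      ENNReal.toReal_mul, ENNReal.toReal_pow, ENNReal.toReal_ofReal hr₀]
    ring
  have hlim : Tendsto (fun n => (p - q) + 2 * (r ^ n * D)) atTop (𝓝 (p - q)) := by
    simpa using (((tendsto_pow_atTop_nhds_zero_of_lt_one hr₀ hr₁).mul_const D).const_mul 2
      ).const_add (p - q)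
  refine ge_of_tendsto' hlim fun n => ?_
  have : IsProbabilityMeasure ((γ n).map Prod.fst) := (hmarg n).1 ▸ ‹_›
  exact (wasserstein1_le_integral (Measure.isProbabilityMeasure_of_map Prod.fst)
    (hmarg n).1 (hmarg n).2).trans_eq (hcost n)

lemma wasserstein1_le_abs_sub [IsProbabilityMeasure μ] [IsProbabilityMeasure ν] (hc₀ : 0 ≤ c)
    (hc : c ≤ 1 / 2) (hp₀ : 0 ≤ p) (hp₁ : p ≤ 1) (hq₀ : 0 ≤ q) (hq₁ : q ≤ 1)
    (hμs : ∀ᵐ x ∂μ, x ∈ Set.Icc (0 : ℝ) 1) (hνs : ∀ᵐ x ∂ν, x ∈ Set.Icc (0 : ℝ) 1)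
    (hμ : IsSelfSimilar c p μ) (hν : IsSelfSimilar c q ν) :
    wasserstein1 μ ν ≤ |p - q| := by
  rcases le_total q p with hqp | hpq
  · exact (wasserstein1_le_sub hc₀ hc hq₀ hqp hp₁ hμs hνs hμ hν).trans (le_abs_self _)
  · rw [wasserstein1_comm, abs_sub_comm]
    exact (wasserstein1_le_sub hc₀ hc hp₀ hpq hq₁ hνs hμs hν hμ).trans (le_abs_self _)

lemma abs_sub_le_wasserstein1 [IsProbabilityMeasure μ] [IsProbabilityMeasure ν] (hc : c ≠ 1)
    (hp₀ : 0 ≤ p) (hp₁ : p ≤ 1) (hq₀ : 0 ≤ q) (hq₁ : q ≤ 1)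
    (hμs : ∀ᵐ x ∂μ, x ∈ Set.Icc (0 : ℝ) 1) (hνs : ∀ᵐ x ∂ν, x ∈ Set.Icc (0 : ℝ) 1)
    (hμ : IsSelfSimilar c p μ) (hν : IsSelfSimilar c q ν) :
    |p - q| ≤ wasserstein1 μ ν := by
  have hμi := integrable_id_of_ae_mem_Icc hμs
  have hνi := integrable_id_of_ae_mem_Icc hνs
  have hmean := abs_sub_integral_le_wasserstein1 hμi hνi
  rwa [integral_id_eq_one_sub hc hp₀ hp₁ hμi hμ, integral_id_eq_one_sub hc hq₀ hq₁ hνi hν,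
    sub_sub_sub_cancel_left, abs_sub_comm] at hmean

end MiddleCantor

theorem wasserstein1_middle_cantor_general
    (c : ℝ) (hc : c ∈ Set.Ioc (0:ℝ) (1/2))
    (p q : ℝ) (hp : p ∈ Set.Ioo (0:ℝ) 1) (hq : q ∈ Set.Ioo (0:ℝ) 1)
    (μp : Measure ℝ) (hμp : IsProbabilityMeasure μp)
    (hsuppp : μp ((Set.Icc (0:ℝ) 1)ᶜ) = 0)
    (hssp : μp = ENNReal.ofReal p • μp.map (fun x : ℝ => c * x)
               + ENNReal.ofReal (1 - p) • μp.map (fun x : ℝ => c * x + (1 - c)))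
    (μq : Measure ℝ) (hμq : IsProbabilityMeasure μq)
    (hsuppq : μq ((Set.Icc (0:ℝ) 1)ᶜ) = 0)
    (hssq : μq = ENNReal.ofReal q • μq.map (fun x : ℝ => c * x)
               + ENNReal.ofReal (1 - q) • μq.map (fun x : ℝ => c * x + (1 - c))) :
    wasserstein1 μp μq = |p - q| := by
  have hsp : ∀ᵐ x ∂μp, x ∈ Set.Icc (0 : ℝ) 1 := mem_ae_iff.mpr hsuppp
  have hsq : ∀ᵐ x ∂μq, x ∈ Set.Icc (0 : ℝ) 1 := mem_ae_iff.mpr hsuppq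
  exact le_antisymm
    (MiddleCantor.wasserstein1_le_abs_sub hc.1.le hc.2 hp.1.le hp.2.le hq.1.le hq.2.le hsp hsq
      hssp hssq)
    (MiddleCantor.abs_sub_le_wasserstein1 (by linarith [hc.2]) hp.1.le hp.2.le hq.1.le hq.2.le
      hsp hsq hssp hssq)

/-- For the middle-(1−2c) Cantor set construction (t₁ = 0, t₂ = 1 − c), the first
Wasserstein distance between μ_p and μ_q is |p − q|, independent of c. -/
theorem wasserstein1_middle_cantor
    (c : ℝ) (hc : c ∈ Set.Ioc (0:ℝ) (1/2))
    (p q : ℝ) (hp : p ∈ Set.Ioo (0:ℝ) 1) (hq : q ∈ Set.Ioo (0:ℝ) 1) (hpq : p ≠ q)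
    (μp : Measure ℝ) (hμp : IsProbabilityMeasure μp)
    (hsuppp : μp ((Set.Icc (0:ℝ) 1)ᶜ) = 0)
    (hssp : μp = ENNReal.ofReal p • μp.map (fun x : ℝ => c * x)
               + ENNReal.ofReal (1 - p) • μp.map (fun x : ℝ => c * x + (1 - c)))
    (μq : Measure ℝ) (hμq : IsProbabilityMeasure μq)
    (hsuppq : μq ((Set.Icc (0:ℝ) 1)ᶜ) = 0)
    (hssq : μq = ENNReal.ofReal q • μq.map (fun x : ℝ => c * x)
               + ENNReal.ofReal (1 - q) • μq.map (fun x : ℝ => c * x + (1 - c))) :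
    wasserstein1 μp μq = |p - q| :=
  wasserstein1_middle_cantor_general c hc p q hp hq μp hμp hsuppp hssp μq hμq hsuppq hssq
end
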